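/- Let (A,I) be a finite independence alphabet and write Δ_A = {(a,a) : a ∈ A}. Then I ∪ Δ_A is a transitive relation on A if and only if the trace monoid M(A,I) is isomorphic to the free product (monoid coproduct) of the free commutative monoids on A₁, …, A_r, where A₁, …, A_r are the connected components of the graph Γ(A,I) with vertex set A and edge set I. -/

import Mathlib

/-!
The letters of a trace monoid are exactly its irreducible elements, and two letters commute
iff they are equal or independent. Hence a monoid isomorphism between two trace monoids maps
letters to letters and preserves the reflexive closure of the independence relation, so
transitivity of `I ∪ Δ` is an isomorphism invariant.

A free product of free commutative monoids on sets `X i` is the trace monoid of the disjoint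
union of the cliques `X i`, for which `I ∪ Δ` is "lie in the same clique", a transitive
relation. Conversely, when `I ∪ Δ` is transitive it is reachability in `Γ(A,I)`, so `(A,I)` is
the disjoint union of cliques on the connected components.
-/

/-- The defining relation of the trace monoid: `ab = ba` whenever `(a,b) ∈ I`. -/
def traceRel (A : Type) (I : A → A → Prop) : FreeMonoid A → FreeMonoid A → Prop :=
  fun x y => ∃ a b : A, I a b ∧ x = FreeMonoid.of a * FreeMonoid.of b ∧
    y = FreeMonoid.of b * FreeMonoid.of a

/-- The congruence on the free monoid generated by the trace relations. -/
def traceCon (A : Type) (I : A → A → Prop) : Con (FreeMonoid A) :=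
  conGen (traceRel A I)

/-- The trace monoid `M(A,I)`, the quotient of the free monoid on `A` by the
congruence generated by `{(ab, ba) : (a,b) ∈ I}`. -/
abbrev TraceMonoid (A : Type) (I : A → A → Prop) := (traceCon A I).Quotient



/-- The image in the trace monoid of a letter `a ∈ A`. -/
def traceOf (A : Type) (I : A → A → Prop) (a : A) : TraceMonoid A I :=
  (traceCon A I).mk' (FreeMonoid.of a)

/-- The set of letters which are periodic points of the endomorphism `φ`. -/
def perLetters (A : Type) (I : A → A → Prop) (φ : Monoid.End (TraceMonoid A I)) : Set A :=
  {a : A | ∃ n : ℕ, 1 ≤ n ∧ (φ ^ n) (traceOf A I a) = traceOf A I a}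

/-- The independence graph `Γ(A,I)`: vertices `A`, with `a` and `b` adjacent iff they
are distinct and independent. (For symmetric `I`, `I a b ∧ I b a` is just `I a b`.) -/
def indepGraph (A : Type) (I : A → A → Prop) : SimpleGraph A where
  Adj a b := a ≠ b ∧ I a b ∧ I b a
  symm := ⟨fun _ _ ⟨h1, h2, h3⟩ => ⟨h1.symm, h3, h2⟩⟩
  loopless := ⟨fun _ ⟨h, _⟩ => h rfl⟩

namespace Finsupp

variable {α M : Type*} [Monoid M]

open scoped IsMulCommutative in
noncomputable def noncommLift (g : α → M) (hg : ∀ a b, Commute (g a) (g b)) :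
    Multiplicative (α →₀ ℕ) →* M :=
  haveI : IsMulCommutative (Submonoid.closure (Set.range g)) :=
    Submonoid.isMulCommutative_closure _ <| by
      rintro _ ⟨a, rfl⟩ _ ⟨b, rfl⟩
      exact hg a b
  (Submonoid.closure (Set.range g)).subtype.comp <|
    AddMonoidHom.toMultiplicativeLeft <| liftAddHom fun a =>
      multiplesHom _ (Additive.ofMul ⟨g a, Submonoid.subset_closure ⟨a, rfl⟩⟩)

@[simp]
theorem noncommLift_single (g : α → M) (hg : ∀ a b, Commute (g a) (g b)) (a : α) :
    noncommLift g hg (Multiplicative.ofAdd (single a 1)) = g a := by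
  simp [noncommLift]

end Finsupp

namespace TraceMonoid

section Letters

variable {B : Type} {J : B → B → Prop}

def lift {N : Type*} [Monoid N] (f : B → N) (hf : ∀ a b, J a b → Commute (f a) (f b)) :
    TraceMonoid B J →* N :=
  Con.lift _ (FreeMonoid.lift f) <| Con.conGen_le.mpr <| by
    rintro _ _ ⟨a, b, hab, rfl, rfl⟩
    simpa only [Con.ker_rel, map_mul, FreeMonoid.lift_eval_of] using (hf a b hab).eq

@[simp]
theorem lift_traceOf {N : Type*} [Monoid N] (f : B → N) (hf : ∀ a b, J a b → Commute (f a) (f b))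
    (a : B) : lift f hf (traceOf B J a) = f a :=
  rfl

theorem hom_ext {N : Type*} [Monoid N] {f g : TraceMonoid B J →* N}
    (h : ∀ a, f (traceOf B J a) = g (traceOf B J a)) : f = g :=
  (MonoidHom.cancel_right Con.mk'_surjective).mp (FreeMonoid.hom_eq h)

theorem commute_traceOf {a b : B} (h : J a b) : Commute (traceOf B J a) (traceOf B J b) := by
  simp only [Commute, SemiconjBy, traceOf, ← map_mul]
  exact (traceCon B J).eq.mpr (ConGen.Rel.of _ _ ⟨a, b, h, rfl, rfl⟩)

def length : TraceMonoid B J →* Multiplicative ℕ :=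
  lift (fun _ => Multiplicative.ofAdd 1) fun _ _ _ => Commute.all _ _

theorem length_mk (w : FreeMonoid B) :
    length ((traceCon B J).mk' w) = Multiplicative.ofAdd w.length := by
  induction w using FreeMonoid.inductionOn' with
  | one => rfl
  | of_mul a w ih =>
    rw [map_mul, map_mul, ih, FreeMonoid.length_mul, FreeMonoid.length_of, ofAdd_add]
    rfl

theorem eq_one_of_length_eq_one {x : TraceMonoid B J} (h : length x = 1) : x = 1 := by
  obtain ⟨w, rfl⟩ := Con.mk'_surjective x
  rw [length_mk, ofAdd_eq_one, FreeMonoid.length_eq_zero] at h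
  rw [h, map_one]

theorem isUnit_iff_eq_one {x : TraceMonoid B J} : IsUnit x ↔ x = 1 :=
  ⟨fun h => eq_one_of_length_eq_one (_root_.isUnit_iff_eq_one.mp (h.map length)),
    fun h => h ▸ isUnit_one⟩

theorem irreducible_traceOf (a : B) : Irreducible (traceOf B J a) := by
  have hlength : length (traceOf B J a) = Multiplicative.ofAdd 1 := rfl
  refine ⟨fun h => ?_, fun y z hyz => ?_⟩
  · rw [isUnit_iff_eq_one.mp h, map_one] at hlength
    exact one_ne_zero (ofAdd_eq_one.mp hlength.symm)
  · rw [hyz, map_mul] at hlength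
    have hsum : (length y).toAdd + (length z).toAdd = 1 := congrArg Multiplicative.toAdd hlength
    simp only [isUnit_iff_eq_one]
    rcases Nat.add_eq_one_iff.mp hsum with ⟨hy, -⟩ | ⟨-, hz⟩
    exacts [.inl (eq_one_of_length_eq_one hy), .inr (eq_one_of_length_eq_one hz)]

theorem exists_eq_traceOf_of_irreducible {x : TraceMonoid B J} (hx : Irreducible x) :
    ∃ a, x = traceOf B J a := by
  obtain ⟨w, rfl⟩ := Con.mk'_surjective x
  induction w using FreeMonoid.inductionOn' with
  | one => exact absurd isUnit_one (map_one (traceCon B J).mk' ▸ hx.not_isUnit)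
  | of_mul a w _ =>
    rw [map_mul] at hx ⊢
    rcases hx.isUnit_or_isUnit rfl with h | h
    · exact absurd h (irreducible_traceOf a).not_isUnit
    · exact ⟨a, by rw [isUnit_iff_eq_one.mp h, mul_one]; rfl⟩

/-- If `a ≠ b` are dependent, erasing all other letters is well defined on traces and sends
`ab` and `ba` to distinct words. -/
theorem commute_traceOf_iff (hsym : Symmetric J) (hirr : Irreflexive J) {a b : B} :
    Commute (traceOf B J a) (traceOf B J b) ↔ J a b ∨ a = b := by
  classical
  refine ⟨fun h => ?_, ?_⟩
  · by_contra! hab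
    let F : B → FreeMonoid B := fun x => if x = a ∨ x = b then .of x else 1
    have hF : ∀ c d, J c d → Commute (F c) (F d) := by
      intro c d hcd
      by_cases hc : c = a ∨ c = b
      · by_cases hd : d = a ∨ d = b
        · exfalso
          rcases hc with rfl | rfl <;> rcases hd with rfl | rfl
          exacts [hirr _ hcd, hab.1 hcd, hab.1 (hsym hcd), hirr _ hcd]
        · simp [F, hd]
      · simp [F, hc]
    have hFab : [a, b] = [b, a] := by
      simpa [F] using congrArg (FreeMonoid.toList ∘ lift F hF) h.eq
    exact hab.2 (List.cons.inj hFab).1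
  · rintro (h | rfl)
    exacts [commute_traceOf h, Commute.refl _]

end Letters

section Isomorphisms

variable {B B' : Type} {J : B → B → Prop} {J' : B' → B' → Prop}

def congr (e : B ≃ B') (he : ∀ a b, J a b ↔ J' (e a) (e b)) :
    TraceMonoid B J ≃* TraceMonoid B' J' :=
  MonoidHom.toMulEquiv
    (lift (fun a => traceOf B' J' (e a)) fun a b h => commute_traceOf ((he a b).mp h))
    (lift (fun a => traceOf B J (e.symm a)) fun a b h =>
      commute_traceOf ((he _ _).mpr (by simpa only [Equiv.apply_symm_apply] using h)))
    (hom_ext fun a => by simp)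
    (hom_ext fun a => by simp)

theorem transitive_of_mulEquiv (hsym : Symmetric J) (hirr : Irreflexive J)
    (hsym' : Symmetric J') (hirr' : Irreflexive J') (e : TraceMonoid B J ≃* TraceMonoid B' J')
    (ht' : Transitive fun a b : B' => J' a b ∨ a = b) :
    Transitive fun a b : B => J a b ∨ a = b := by
  choose f hf using fun a => exists_eq_traceOf_of_irreducible
    ((MulEquiv.irreducible_iff e).mpr (irreducible_traceOf a))
  have hJ : ∀ a b, (J a b ∨ a = b) ↔ (J' (f a) (f b) ∨ f a = f b) := fun a b => by
    rw [← commute_traceOf_iff hsym hirr, ← commute_traceOf_iff hsym' hirr', ← hf, ← hf,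
      commute_map_iff e.injective]
  intro a b c hab hbc
  exact (hJ a c).mpr (ht' ((hJ a b).mp hab) ((hJ b c).mp hbc))

end Isomorphisms

section DisjointCliques

variable {ι : Type} {X : ι → Type}

/-- The independence relation of the disjoint union of the cliques `X i`. -/
def sigmaCliqueRel (X : ι → Type) (x y : Σ i, X i) : Prop :=
  x.1 = y.1 ∧ x ≠ y

theorem sigmaCliqueRel_symm : Symmetric (sigmaCliqueRel X) :=
  fun _ _ h => ⟨h.1.symm, h.2.symm⟩

theorem sigmaCliqueRel_irrefl : Irreflexive (sigmaCliqueRel X) :=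
  fun _ h => h.2 rfl

theorem sigmaCliqueRel_or_eq_iff {x y : Σ i, X i} : sigmaCliqueRel X x y ∨ x = y ↔ x.1 = y.1 := by
  refine ⟨by rintro (h | rfl); exacts [h.1, rfl], fun h => ?_⟩
  by_cases hxy : x = y
  exacts [.inr hxy, .inl ⟨h, hxy⟩]

theorem transitive_sigmaCliqueRel_or_eq :
    Transitive fun x y : Σ i, X i => sigmaCliqueRel X x y ∨ x = y := by
  intro x y z hxy hyz
  rw [sigmaCliqueRel_or_eq_iff] at *
  exact hxy.trans hyz

noncomputable def sigmaCliqueEquivCoprodI :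
    TraceMonoid (Σ i, X i) (sigmaCliqueRel X) ≃*
      Monoid.CoprodI fun i => Multiplicative (X i →₀ ℕ) :=
  MonoidHom.toMulEquiv
    (lift (fun x => Monoid.CoprodI.of (Multiplicative.ofAdd (Finsupp.single x.2 1))) <| by
      rintro ⟨i, u⟩ ⟨j, v⟩ ⟨rfl : i = j, -⟩
      exact (Commute.all _ _).map Monoid.CoprodI.of)
    (Monoid.CoprodI.lift fun i => Finsupp.noncommLift (fun u => traceOf _ _ ⟨i, u⟩) fun u v => by
      by_cases huv : u = v
      · exact huv ▸ Commute.refl _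
      · exact commute_traceOf ⟨rfl, fun h => huv (eq_of_heq (Sigma.mk.inj h).2)⟩)
    (hom_ext fun x => by simp)
    (by ext; simp)

end DisjointCliques

end TraceMonoid

section IndependenceGraph

variable {A : Type} {I : A → A → Prop}

theorem indepGraph_reachable_iff (hsym : Symmetric I) (hirr : Irreflexive I)
    (ht : Transitive fun a b : A => I a b ∨ a = b) {a b : A} :
    (indepGraph A I).Reachable a b ↔ I a b ∨ a = b := by
  refine ⟨fun h => ?_, ?_⟩
  · rw [SimpleGraph.reachable_iff_reflTransGen] at h
    induction h with
    | refl => exact .inr rfl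
    | tail _ hbc ih => exact ht ih (.inl hbc.2.1)
  · rintro (h | rfl)
    exacts [SimpleGraph.Adj.reachable ⟨fun hab => hirr a (hab ▸ h), h, hsym h⟩, .rfl]

theorem indep_iff_sigmaCliqueRel (hsym : Symmetric I) (hirr : Irreflexive I)
    (ht : Transitive fun a b : A => I a b ∨ a = b) (a b : A) :
    I a b ↔ TraceMonoid.sigmaCliqueRel _
      ((Equiv.sigmaFiberEquiv (indepGraph A I).connectedComponentMk).symm a)
      ((Equiv.sigmaFiberEquiv (indepGraph A I).connectedComponentMk).symm b) := by
  rw [TraceMonoid.sigmaCliqueRel, Ne, EmbeddingLike.apply_eq_iff_eq]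
  simp only [Equiv.sigmaFiberEquiv_symm_apply_fst, SimpleGraph.ConnectedComponent.eq,
    indepGraph_reachable_iff hsym hirr ht]
  exact ⟨fun h => ⟨.inl h, fun hab => hirr a (hab ▸ h)⟩, fun ⟨h, hab⟩ => h.resolve_right hab⟩

end IndependenceGraph

theorem transitive_iff_coprod_of_freeComm_general (A : Type) (I : A → A → Prop)
    (hsym : Symmetric I) (hirr : Irreflexive I) :
    Transitive (fun a b : A => I a b ∨ a = b) ↔
      Nonempty (TraceMonoid A I ≃*
        Monoid.CoprodI (fun c : (indepGraph A I).ConnectedComponent =>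
          Multiplicative ({a : A // (indepGraph A I).connectedComponentMk a = c} →₀ ℕ))) := by
  constructor
  · intro ht
    exact ⟨(TraceMonoid.congr _ (indep_iff_sigmaCliqueRel hsym hirr ht)).trans
      TraceMonoid.sigmaCliqueEquivCoprodI⟩
  · rintro ⟨e⟩
    exact TraceMonoid.transitive_of_mulEquiv hsym hirr TraceMonoid.sigmaCliqueRel_symm
      TraceMonoid.sigmaCliqueRel_irrefl (e.trans TraceMonoid.sigmaCliqueEquivCoprodI.symm)
      TraceMonoid.transitive_sigmaCliqueRel_or_eq

/-- `I ∪ Δ_A` is transitive iff the trace monoid `M(A,I)` is isomorphic to the free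
product (monoid coproduct) of the free commutative monoids on the connected
components of `Γ(A,I)`. -/
theorem transitive_iff_coprod_of_freeComm (A : Type) [Fintype A] (I : A → A → Prop)
    (hsym : Symmetric I) (hirr : Irreflexive I) :
    Transitive (fun a b : A => I a b ∨ a = b) ↔
      Nonempty (TraceMonoid A I ≃*
        Monoid.CoprodI (fun c : (indepGraph A I).ConnectedComponent =>
          Multiplicative ({a : A // (indepGraph A I).connectedComponentMk a = c} →₀ ℕ))) :=
  transitive_iff_coprod_of_freeComm_general A I hsym hirr
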